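/- arXiv:q-alg/9611009 — 2 statements merged into one kernel-verified Lean document; each statement's English description precedes it below -/
import Mathlib

section
/- Let q = e^{2πi n/m} and j = (d-1) + (m/(2n)) z with z ∈ ℤ. Then -[k]_q [j-k+1]_q = (-1)^{z+1} sin(2πnk/m) sin(2πn(d-k)/m) / sin(2πn/m)^2 for all integers k. -/
open Real

theorem Real.sin_mul_add_half_period (a x : ℝ) (ha : a ≠ 0) (z : ℤ) :
    sin (a * (x + π / a * z)) = (-1) ^ z * sin (a * x) := by
  rw [mul_add, ← mul_assoc, mul_div_cancel₀ _ ha, mul_comm π, sin_add_int_mul_pi]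

theorem qint_product_formula_general (n m : ℕ) (hn : 0 < n) (hm : 2 < m)
    (qint : ℝ → ℝ)
    (hqint : ∀ x : ℝ, qint x = Real.sin (2 * π * n * x / m) / Real.sin (2 * π * n / m))
    (d z k : ℤ) (j : ℝ) (hj : j = ((d : ℝ) - 1) + ((m : ℝ) / (2 * n)) * z) :
    -(qint (k : ℝ) * qint (j - k + 1)) =
      (-1 : ℝ) ^ (z + 1) * Real.sin (2 * π * n * k / m) * Real.sin (2 * π * n * ((d : ℝ) - k) / m)
        / Real.sin (2 * π * n / m) ^ 2 := by
  set a : ℝ := 2 * π * n / m with ha_def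
  have ha : a ≠ 0 := by
    have : (0 : ℝ) < m := by exact_mod_cast (by omega : 0 < m)
    positivity
  have hsin (x : ℝ) : sin (2 * π * n * x / m) = sin (a * x) := by rw [mul_div_right_comm]
  have hshift : j - k + 1 = (d - k) + π / a * z := by
    rw [hj, ha_def]
    field_simp
    ring
  rw [hqint, hqint, hsin, hsin, hsin, hshift, Real.sin_mul_add_half_period _ _ ha,
    zpow_add_one₀ (by norm_num : (-1 : ℝ) ≠ 0)]
  ring

/-- Let `q = e^{2πi n/m}` and `j = (d-1) + (m/(2n)) z` with `z ∈ ℤ`, and write the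
q-integers as sin-ratios `[x]_q = sin(2πnx/m)/sin(2πn/m)`. Then
`-[k]_q [j-k+1]_q = (-1)^{z+1} sin(2πnk/m) sin(2πn(d-k)/m) / sin(2πn/m)^2`
for all integers `k`. -/
theorem qint_product_formula (n m : ℕ) (hn : 0 < n) (hm : 2 < m) (hco : Nat.Coprime n m)
    (qint : ℝ → ℝ)
    (hqint : ∀ x : ℝ, qint x = Real.sin (2 * π * n * x / m) / Real.sin (2 * π * n / m))
    (d z k : ℤ) (j : ℝ) (hj : j = ((d : ℝ) - 1) + ((m : ℝ) / (2 * n)) * z) :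
    -(qint (k : ℝ) * qint (j - k + 1)) =
      (-1 : ℝ) ^ (z + 1) * Real.sin (2 * π * n * k / m) * Real.sin (2 * π * n * ((d : ℝ) - k) / m)
        / Real.sin (2 * π * n / m) ^ 2 :=
  qint_product_formula_general n m hn hm qint hqint d z k j hj
end

section
/- Define a_k = (-1)^k [k]_q! · [j]_q [j-1]_q ⋯ [j-k+1]_q with j = (d-1) + (m/(2n)) z. Then a_k > 0 for all k = 1, …, d-1 if and only if (-1)^{z+1} sin(2πnk/m) sin(2πn(d-k)/m) > 0 for all k = 1, …, d-1. -/
/-!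
The ratio `a k / a (k - 1) = -[k]_q [j-k+1]_q` decides the signs. Since `2πn/m · m/(2n) = π`,
shifting the argument of `[·]_q` by `(m/(2n)) z` multiplies the numerator sine by `(-1)^z`, so the
ratio is `(-1)^(z+1) sin(2πnk/m) sin(2πn(d-k)/m) / sin(2πn/m)^2`. The denominator is a nonzero
square because `m ∤ 2n`, and a sequence starting at `1` stays positive up to `d - 1` exactly when
its successive ratios do.
-/

open Real

theorem forall_pos_iff_of_eq_mul_pred {α : Type*} [Semiring α] [LinearOrder α]
    [IsStrictOrderedRing α] {a c : ℕ → α} (ha0 : 0 < a 0)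
    (hrec : ∀ k, a (k + 1) = c (k + 1) * a k) (N : ℕ) :
    (∀ k, 1 ≤ k → k < N → 0 < a k) ↔ (∀ k, 1 ≤ k → k < N → 0 < c k) := by
  constructor
  · rintro H (_ | k) hk hkN
    · omega
    have hak : 0 < a k := by
      rcases k with _ | k
      exacts [ha0, H _ k.succ_pos (by omega)]
    rw [← mul_pos_iff_of_pos_right hak, ← hrec]
    exact H _ hk hkN
  · rintro H k - hkN
    induction k with
    | zero => exact ha0
    | succ k ih => exact hrec k ▸ mul_pos (H _ k.succ_pos hkN) (ih (by omega))

theorem sin_two_pi_mul_div_ne_zero {n m : ℕ} (hm : 2 < m) (hco : n.Coprime m) :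
    sin (2 * π * n / m) ≠ 0 := by
  rw [Ne, sin_eq_zero_iff]
  rintro ⟨k, hk⟩
  have hmR : (m : ℝ) ≠ 0 := by positivity
  have hkm : (k * m : ℝ) = 2 * n := by
    field_simp at hk
    nlinarith [pi_pos]
  have hdvd : m ∣ 2 * n :=
    Int.natCast_dvd_natCast.mp ⟨k, by exact_mod_cast (by linarith : (2 * n : ℝ) = m * k)⟩
  have := Nat.le_of_dvd two_pos (hco.symm.dvd_of_dvd_mul_right hdvd)
  omega

theorem sin_two_pi_mul_div_add_mul_half_period {n m : ℕ} (hn : n ≠ 0) (hm : m ≠ 0) (x : ℝ)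
    (z : ℤ) :
    sin (2 * π * n * (x + m / (2 * n) * z) / m) = (-1) ^ z * sin (2 * π * n * x / m) := by
  rw [← sin_add_int_mul_pi]
  congr 1
  field_simp

theorem unitarity_condition_general (n m : ℕ) (hm : 2 < m) (hco : Nat.Coprime n m)
    (qint : ℝ → ℝ)
    (hqint : ∀ x : ℝ, qint x = Real.sin (2 * π * n * x / m) / Real.sin (2 * π * n / m))
    (d z : ℤ) (j : ℝ) (hj : j = ((d : ℝ) - 1) + ((m : ℝ) / (2 * n)) * z)
    (a : ℕ → ℝ) (ha0 : a 0 = 1)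
    (harec : ∀ k : ℕ, 1 ≤ k → a k = -(qint (k : ℝ) * qint (j - k + 1)) * a (k - 1)) :
    (∀ k : ℕ, 1 ≤ k → (k : ℤ) ≤ d - 1 → 0 < a k) ↔
      (∀ k : ℕ, 1 ≤ k → (k : ℤ) ≤ d - 1 →
        0 < (-1 : ℝ) ^ (z + 1) * Real.sin (2 * π * n * k / m) *
          Real.sin (2 * π * n * ((d : ℝ) - k) / m)) := by
  have hn : n ≠ 0 := by
    rintro rfl
    rw [Nat.coprime_zero_left] at hco
    omega
  have hs : 0 < sin (2 * π * n / m) ^ 2 := by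
    have := sin_two_pi_mul_div_ne_zero hm hco
    positivity
  have hc (k : ℕ) : -(qint k * qint (j - k + 1)) =
      (-1 : ℝ) ^ (z + 1) * sin (2 * π * n * k / m) * sin (2 * π * n * ((d : ℝ) - k) / m) /
        sin (2 * π * n / m) ^ 2 := by
    have hjk : j - k + 1 = (d - k) + m / (2 * n) * z := by rw [hj]; ring
    rw [hqint, hqint, hjk, sin_two_pi_mul_div_add_mul_half_period hn (by omega),
      zpow_add_one₀ (by norm_num)]
    ring
  have hbound (k : ℕ) : (k : ℤ) ≤ d - 1 ↔ k < d.toNat := by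
    rw [Int.lt_toNat]
    omega
  simp_rw [hbound, forall_pos_iff_of_eq_mul_pred (c := fun k : ℕ ↦ -(qint k * qint (j - k + 1)))
    (ha0 ▸ one_pos) (fun k ↦ harec (k + 1) k.succ_pos), hc,
    div_pos_iff_of_pos_right hs]

/-- Define `a_k = (-1)^k [k]_q! · [j]_q [j-1]_q ⋯ [j-k+1]_q`, i.e. `a_0 = 1` and
`a_k = -[k]_q [j-k+1]_q a_{k-1}`, with `j = (d-1) + (m/(2n)) z` and q-integers given as
sin-ratios. Then `a_k > 0` for all `k = 1, …, d-1` if and only if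
`(-1)^{z+1} sin(2πnk/m) sin(2πn(d-k)/m) > 0` for all `k = 1, …, d-1`. -/
theorem unitarity_condition (n m : ℕ) (hn : 0 < n) (hm : 2 < m) (hco : Nat.Coprime n m)
    (qint : ℝ → ℝ)
    (hqint : ∀ x : ℝ, qint x = Real.sin (2 * π * n * x / m) / Real.sin (2 * π * n / m))
    (d z : ℤ) (hd : 1 ≤ d) (j : ℝ) (hj : j = ((d : ℝ) - 1) + ((m : ℝ) / (2 * n)) * z)
    (a : ℕ → ℝ) (ha0 : a 0 = 1)
    (harec : ∀ k : ℕ, 1 ≤ k → a k = -(qint (k : ℝ) * qint (j - k + 1)) * a (k - 1)) :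
    (∀ k : ℕ, 1 ≤ k → (k : ℤ) ≤ d - 1 → 0 < a k) ↔
      (∀ k : ℕ, 1 ≤ k → (k : ℤ) ≤ d - 1 →
        0 < (-1 : ℝ) ^ (z + 1) * Real.sin (2 * π * n * k / m) *
          Real.sin (2 * π * n * ((d : ℝ) - k) / m)) :=
  unitarity_condition_general n m hm hco qint hqint d z j hj a ha0 harec
end
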